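/- Let F be as in the previous context and let F⁻¹(a,b,c,d,e,f) = ((a²-ce)/d, e, (c²-ea)/f, a, (e²-ac)/b, c) be its inverse. Then for any t, b, d, f ∈ ℂ with b, d, f, t all nonzero, F⁻¹(t,b,t,d,t,f) = (0,t,0,t,0,t) and F⁻²(t,b,t,d,t,f) = (0,0,0,0,0,0). Consequently F⁻³ is not defined on any point of the form (t,b,t,d,t,f). -/

import Mathlib

noncomputable def devronFinv : ℂ × ℂ × ℂ × ℂ × ℂ × ℂ → ℂ × ℂ × ℂ × ℂ × ℂ × ℂ
  | (a, b, c, d, e, f) =>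
      ((a ^ 2 - c * e) / d, e, (c ^ 2 - e * a) / f, a, (e ^ 2 - a * c) / b, c)

/-- All three numerators of `F⁻¹` vanish when `a = c = e`. -/
theorem devronFinv_of_eq (a b d f : ℂ) : devronFinv (a, b, a, d, a, f) = (0, a, 0, a, 0, a) := by
  simp [devronFinv, sq]

theorem devron_stmt_4_general (t b d f : ℂ) :
    devronFinv (t, b, t, d, t, f) = (0, t, 0, t, 0, t) ∧
    devronFinv (devronFinv (t, b, t, d, t, f)) = (0, 0, 0, 0, 0, 0) ∧
    -- `F⁻¹(x₁,…,x₆)` divides by `x₄`, `x₆` and `x₂`, and at `F⁻²(t,b,t,d,t,f)`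
    -- these three denominators are all zero:
    (∀ x₁ x₂ x₃ x₄ x₅ x₆ : ℂ,
      devronFinv (devronFinv (t, b, t, d, t, f)) = (x₁, x₂, x₃, x₄, x₅, x₆) →
      x₄ = 0 ∧ x₆ = 0 ∧ x₂ = 0) := by
  have hFinv₂ : devronFinv (devronFinv (t, b, t, d, t, f)) = (0, 0, 0, 0, 0, 0) := by
    rw [devronFinv_of_eq, devronFinv_of_eq]
  refine ⟨devronFinv_of_eq t b d f, hFinv₂, fun x₁ x₂ x₃ x₄ x₅ x₆ h => ?_⟩
  simp only [hFinv₂, Prod.mk.injEq] at h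
  exact ⟨h.2.2.2.1.symm, h.2.2.2.2.2.symm, h.2.1.symm⟩

/-- `F⁻¹(t,b,t,d,t,f) = (0,t,0,t,0,t)`, `F⁻²(t,b,t,d,t,f) = (0,0,0,0,0,0)`, and
consequently all denominators of a further application of `F⁻¹` vanish, so `F⁻³`
is not defined on such points. -/
theorem devron_stmt_4 (t b d f : ℂ) (ht : t ≠ 0) (hb : b ≠ 0) (hd : d ≠ 0) (hf : f ≠ 0) :
    devronFinv (t, b, t, d, t, f) = (0, t, 0, t, 0, t) ∧
    devronFinv (devronFinv (t, b, t, d, t, f)) = (0, 0, 0, 0, 0, 0) ∧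
    -- `F⁻¹(x₁,…,x₆)` divides by `x₄`, `x₆` and `x₂`, and at `F⁻²(t,b,t,d,t,f)`
    -- these three denominators are all zero:
    (∀ x₁ x₂ x₃ x₄ x₅ x₆ : ℂ,
      devronFinv (devronFinv (t, b, t, d, t, f)) = (x₁, x₂, x₃, x₄, x₅, x₆) →
      x₄ = 0 ∧ x₆ = 0 ∧ x₂ = 0) :=
  devron_stmt_4_general t b d f
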